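/- For every graphon W and every positive integer n, t(K_{2n,2n}, W) ≥ t(K_{2,2}, W)^{n²}, where K_{a,b} denotes the complete bipartite graph. -/

import Mathlib

open MeasureTheory

noncomputable section

/-- The Lebesgue measure restricted to `[0,1]`. -/
abbrev muI : Measure ℝ := volume.restrict (Set.Icc 0 1)

/-- A graphon: a symmetric measurable function `[0,1]² → [0,1]`
(represented as a function on `ℝ²`). -/
def IsGraphon (W : ℝ → ℝ → ℝ) : Prop :=
  Measurable (Function.uncurry W) ∧ (∀ x y, W x y = W y x) ∧
    (∀ x y, W x y ∈ Set.Icc (0:ℝ) 1)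

/-- The edges of a graph on `Fin m`, each listed once as an ordered pair. -/
def edgeFinset' {m : ℕ} (G : SimpleGraph (Fin m)) [DecidableRel G.Adj] :
    Finset (Fin m × Fin m) :=
  Finset.univ.filter fun p => p.1 < p.2 ∧ G.Adj p.1 p.2

/-- The number of edges of `G`. -/
def edgeCount {m : ℕ} (G : SimpleGraph (Fin m)) [DecidableRel G.Adj] : ℕ :=
  (edgeFinset' G).card

/-- The homomorphism density `t(G, W)`. -/
def homDensity {m : ℕ} (G : SimpleGraph (Fin m)) [DecidableRel G.Adj]
    (W : ℝ → ℝ → ℝ) : ℝ :=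
  ∫ x : Fin m → ℝ, ∏ p ∈ edgeFinset' G, W (x p.1) (x p.2)
    ∂(Measure.pi fun _ => muI)

/-- The single-edge graph `K₂`. -/
abbrev K2 : SimpleGraph (Fin 2) := ⊤

/-- The complete bipartite graph `K_{a,b}` on `Fin (a+b)`. -/
def bip (a b : ℕ) : SimpleGraph (Fin (a + b)) where
  Adj i j := (decide (i.val < a)) ≠ (decide (j.val < a))
  symm := ⟨fun _ _ h => h.symm⟩
  loopless := ⟨fun _ h => h rfl⟩

instance (a b : ℕ) : DecidableRel (bip a b).Adj :=
  fun i j => inferInstanceAs (Decidable (_ ≠ _))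

/-- The cycle `C_n` on `Fin n` (for `n ≥ 3`). -/
def cyc (n : ℕ) : SimpleGraph (Fin n) where
  Adj i j := i ≠ j ∧ ((i.val + 1) % n = j.val ∨ (j.val + 1) % n = i.val)
  symm := ⟨fun _ _ h => ⟨h.1.symm, h.2.symm⟩⟩
  loopless := ⟨fun _ h => h.1 rfl⟩

instance (n : ℕ) : DecidableRel (cyc n).Adj :=
  fun i j => inferInstanceAs (Decidable (_ ∧ _))

/-! Integrating out one side of `K_{a,b}` gives
`t(K_{a,b}, W) = ∫ (∫ ∏_{i<a} W(u_i, t) dt)^b du`. Jensen's inequality `(∫ f)^n ≤ ∫ f^n` for the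
nonnegative function `f = (∫ ∏_{i<a} W(u_i, t) dt)^b` then gives `t(K_{a,b})^n ≤ t(K_{a,bn})`,
and by Fubini the same holds for the other side. Reflecting `K_{2,2}` first along one side and
then along the other gives the claim. -/

instance : IsProbabilityMeasure muI := ⟨by simp [Real.volume_Icc]⟩

theorem pow_integral_le_integral_pow {α : Type*} [MeasurableSpace α] {μ : Measure α}
    [IsProbabilityMeasure μ] {f : α → ℝ} (hf0 : 0 ≤ᵐ[μ] f) (hf : Integrable f μ) (n : ℕ)
    (hfn : Integrable (fun x => f x ^ n) μ) :
    (∫ x, f x ∂μ) ^ n ≤ ∫ x, f x ^ n ∂μ :=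
  (convexOn_pow n).map_integral_le (continuous_pow n).continuousOn isClosed_Ici hf0 hf hfn

theorem integrable_of_mem_unitInterval {α : Type*} [MeasurableSpace α] {μ : Measure α}
    [IsFiniteMeasure μ] {f : α → ℝ} (hf : Measurable f) (hf01 : ∀ x, f x ∈ unitInterval) :
    Integrable f μ :=
  .of_bound hf.aestronglyMeasurable 1 <| .of_forall fun x => by
    rw [Real.norm_eq_abs, abs_of_nonneg (hf01 x).1]; exact (hf01 x).2

theorem integral_mem_unitInterval {α : Type*} [MeasurableSpace α] {μ : Measure α}
    [IsProbabilityMeasure μ] {f : α → ℝ} (hf01 : ∀ x, f x ∈ unitInterval) :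
    ∫ x, f x ∂μ ∈ unitInterval := by
  refine ⟨integral_nonneg fun x => (hf01 x).1, ?_⟩
  by_cases hf : Integrable f μ
  · calc ∫ x, f x ∂μ ≤ ∫ _, (1 : ℝ) ∂μ :=
          integral_mono hf (integrable_const 1) fun x => (hf01 x).2
      _ = 1 := by simp
  · simp [integral_undef hf]

section BipartiteDensity

variable {α β : Type*} [MeasurableSpace α] [MeasurableSpace β] (μ : Measure α) (ν : Measure β)

def bipDensity (K : α → β → ℝ) (a b : ℕ) : ℝ :=
  ∫ z, ∏ i : Fin a, ∏ j : Fin b, K (z.1 i) (z.2 j)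
    ∂((Measure.pi fun _ => μ).prod (Measure.pi fun _ => ν))

def codegree (K : α → β → ℝ) {a : ℕ} (u : Fin a → α) : ℝ :=
  ∫ t, ∏ i, K (u i) t ∂ν

theorem bipDensity_swap [SigmaFinite μ] [SigmaFinite ν] (K : α → β → ℝ) (a b : ℕ) :
    bipDensity μ ν K a b = bipDensity ν μ (flip K) b a := by
  rw [bipDensity, ← integral_prod_swap, bipDensity]
  exact integral_congr_ae (.of_forall fun z => Finset.prod_comm)

variable {K : α → β → ℝ}

theorem bipDensity_nonneg (hK0 : ∀ x y, 0 ≤ K x y) (a b : ℕ) : 0 ≤ bipDensity μ ν K a b :=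
  integral_nonneg fun _ => Finset.prod_nonneg fun _ _ => Finset.prod_nonneg fun _ _ => hK0 _ _

theorem measurable_codegree [SFinite ν] (hK : Measurable (Function.uncurry K)) (a : ℕ) :
    Measurable (codegree ν K : (Fin a → α) → ℝ) := by
  have hprod : Measurable fun p : (Fin a → α) × β => ∏ i, K (p.1 i) p.2 := by fun_prop
  exact hprod.stronglyMeasurable.integral_prod_right'.measurable

theorem bipDensity_eq_integral_codegree_pow [IsFiniteMeasure μ] [IsFiniteMeasure ν]
    (hK : Measurable (Function.uncurry K)) (hK01 : ∀ x y, K x y ∈ unitInterval) (a b : ℕ) :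
    bipDensity μ ν K a b = ∫ u, codegree ν K u ^ b ∂(Measure.pi fun _ : Fin a => μ) := by
  have hint : Integrable (fun z : (Fin a → α) × (Fin b → β) =>
      ∏ i, ∏ j, K (z.1 i) (z.2 j)) ((Measure.pi fun _ => μ).prod (Measure.pi fun _ => ν)) :=
    integrable_of_mem_unitInterval (by fun_prop) fun z =>
      unitInterval.prod_mem fun _ _ => unitInterval.prod_mem fun _ _ => hK01 _ _
  rw [bipDensity, integral_prod _ hint]
  refine integral_congr_ae (.of_forall fun u => ?_)
  have hpow := integral_fintype_prod_eq_pow (ι := Fin b) (μ := ν) fun t => ∏ i, K (u i) t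
  rw [Fintype.card_fin] at hpow
  simp only [codegree, ← hpow]
  exact integral_congr_ae (.of_forall fun v => Finset.prod_comm)

variable [IsProbabilityMeasure μ] [IsProbabilityMeasure ν]

theorem bipDensity_pow_le_mul_right (hK : Measurable (Function.uncurry K))
    (hK01 : ∀ x y, K x y ∈ unitInterval) (a b n : ℕ) :
    bipDensity μ ν K a b ^ n ≤ bipDensity μ ν K a (b * n) := by
  have hmem (u : Fin a → α) : codegree ν K u ^ b ∈ unitInterval :=
    pow_mem (S := unitInterval.submonoid)
      (integral_mem_unitInterval fun t => unitInterval.prod_mem fun i _ => hK01 (u i) t) b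
  have hmeas : Measurable fun u : Fin a → α => codegree ν K u ^ b :=
    (measurable_codegree ν hK a).pow_const b
  simp only [bipDensity_eq_integral_codegree_pow μ ν hK hK01, pow_mul]
  exact pow_integral_le_integral_pow (.of_forall fun u => (hmem u).1)
    (integrable_of_mem_unitInterval hmeas hmem) n
    (integrable_of_mem_unitInterval (hmeas.pow_const n) fun u =>
      pow_mem (S := unitInterval.submonoid) (hmem u) n)

theorem bipDensity_pow_le_mul_left (hK : Measurable (Function.uncurry K))
    (hK01 : ∀ x y, K x y ∈ unitInterval) (a b n : ℕ) :
    bipDensity μ ν K a b ^ n ≤ bipDensity μ ν K (a * n) b := by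
  simp only [bipDensity_swap μ ν K]
  exact bipDensity_pow_le_mul_right ν μ (by exact hK.comp measurable_swap) (fun y x => hK01 x y)
    b a n

end BipartiteDensity

theorem mem_edgeFinset'_bip {a b : ℕ} {p : Fin (a + b) × Fin (a + b)} :
    p ∈ edgeFinset' (bip a b) ↔ p.1.val < a ∧ a ≤ p.2.val := by
  simp only [edgeFinset', bip, Finset.mem_filter, Finset.mem_univ, true_and, Fin.lt_def,
    ne_eq, decide_eq_decide]
  omega

theorem prod_edgeFinset'_bip {M : Type*} [CommMonoid M] (a b : ℕ)
    (f : Fin (a + b) → Fin (a + b) → M) :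
    ∏ p ∈ edgeFinset' (bip a b), f p.1 p.2
      = ∏ i : Fin a, ∏ j : Fin b, f (Fin.castAdd b i) (Fin.natAdd a j) := by
  rw [← Finset.prod_product']
  refine (Finset.prod_bij (fun q _ => (Fin.castAdd b q.1, Fin.natAdd a q.2)) ?_ ?_ ?_ ?_).symm
  · intro q _
    exact mem_edgeFinset'_bip.mpr ⟨q.1.isLt, Nat.le_add_right a q.2⟩
  · intro q _ q' _ h
    simp only [Prod.mk.injEq, Fin.castAdd_inj, Fin.natAdd_inj] at h
    exact Prod.ext h.1 h.2
  · intro p hp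
    obtain ⟨h1, h2⟩ := mem_edgeFinset'_bip.mp hp
    exact ⟨(⟨p.1, h1⟩, ⟨p.2 - a, by omega⟩), Finset.mem_univ _,
      Prod.ext (Fin.ext rfl) (Fin.ext (by simp; omega))⟩
  · intro q _; rfl

def Fin.appendMeasurableEquiv (α : Type*) [MeasurableSpace α] (a b : ℕ) :
    (Fin a → α) × (Fin b → α) ≃ᵐ (Fin (a + b) → α) :=
  (MeasurableEquiv.sumPiEquivProdPi fun _ => α).symm.trans
    (MeasurableEquiv.piCongrLeft (fun _ => α) finSumFinEquiv)

theorem Fin.coe_appendMeasurableEquiv (α : Type*) [MeasurableSpace α] (a b : ℕ) :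
    ⇑(Fin.appendMeasurableEquiv α a b) = fun p => Fin.append p.1 p.2 := by
  ext p i
  refine Fin.addCases (fun i => ?_) (fun j => ?_) i
  · rw [Fin.append_left, ← finSumFinEquiv_apply_left]
    simp only [Fin.appendMeasurableEquiv, MeasurableEquiv.trans_apply,
      MeasurableEquiv.coe_piCongrLeft, Equiv.piCongrLeft_apply_apply]
    rfl
  · rw [Fin.append_right, ← finSumFinEquiv_apply_right]
    simp only [Fin.appendMeasurableEquiv, MeasurableEquiv.trans_apply,
      MeasurableEquiv.coe_piCongrLeft, Equiv.piCongrLeft_apply_apply]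
    rfl

theorem Fin.measurePreserving_appendMeasurableEquiv {α : Type*} [MeasurableSpace α]
    (μ : Measure α) [SigmaFinite μ] (a b : ℕ) :
    MeasurePreserving (Fin.appendMeasurableEquiv α a b)
      ((Measure.pi fun _ : Fin a => μ).prod (Measure.pi fun _ : Fin b => μ))
      (Measure.pi fun _ : Fin (a + b) => μ) :=
  (measurePreserving_piCongrLeft (fun _ => μ) finSumFinEquiv).comp
    (measurePreserving_sumPiEquivProdPi_symm fun _ => μ)

theorem homDensity_bip_eq_bipDensity (a b : ℕ) (W : ℝ → ℝ → ℝ) :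
    homDensity (bip a b) W = bipDensity muI muI W a b := by
  rw [homDensity, bipDensity,
    ← (Fin.measurePreserving_appendMeasurableEquiv muI a b).integral_comp']
  refine integral_congr_ae (.of_forall fun z => ?_)
  simp only [Fin.coe_appendMeasurableEquiv]
  rw [prod_edgeFinset'_bip a b fun i j => W (Fin.append z.1 z.2 i) (Fin.append z.1 z.2 j)]
  simp only [Fin.append_left, Fin.append_right]

theorem knn_density_general (n : ℕ) (W : ℝ → ℝ → ℝ) (hW : IsGraphon W) :
    homDensity (bip 2 2) W ^ (n ^ 2) ≤ homDensity (bip (2 * n) (2 * n)) W := by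
  obtain ⟨hWm, -, hW01⟩ := hW
  simp only [homDensity_bip_eq_bipDensity]
  calc bipDensity muI muI W 2 2 ^ (n ^ 2) = (bipDensity muI muI W 2 2 ^ n) ^ n := by ring
    _ ≤ bipDensity muI muI W 2 (2 * n) ^ n := by
        gcongr
        · exact pow_nonneg (bipDensity_nonneg _ _ (fun x y => (hW01 x y).1) 2 2) n
        · exact bipDensity_pow_le_mul_right _ _ hWm hW01 2 2 n
    _ ≤ bipDensity muI muI W (2 * n) (2 * n) :=
        bipDensity_pow_le_mul_left _ _ hWm hW01 2 (2 * n) n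

/-- `t(K_{2n,2n}, W) ≥ t(K_{2,2}, W)^{n²}`. -/
theorem knn_density (n : ℕ) (hn : 1 ≤ n) (W : ℝ → ℝ → ℝ) (hW : IsGraphon W) :
    homDensity (bip 2 2) W ^ (n ^ 2) ≤ homDensity (bip (2 * n) (2 * n)) W :=
  knn_density_general n W hW

end
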